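/- Let ℓ be an odd prime. The set of indices [GL₂(ℤ/ℓℤ) : G] over subgroups G of GL₂(ℤ/ℓℤ) that belong to the nonsplit Cartan C_ns(ℓ) equals the set of positive integers divisible by ℓ(ℓ−1) and dividing an element of {ℓ(ℓ+1)(ℓ−1)²/q : q an odd prime dividing ℓ+1} ∪ {ℓ(ℓ+1)(ℓ−1)²/2^{ν₂(ℓ−1)+1}}, where ν₂ denotes the 2-adic valuation. -/

import Mathlib

open Matrix

abbrev GL2 (ℓ : ℕ) : Type := GL (Fin 2) (ZMod ℓ)

namespace Paper

/-- The underlying matrix of an element of `GL₂(ℤ/ℓℤ)`. -/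
def mat {ℓ : ℕ} (g : GL2 ℓ) : Matrix (Fin 2) (Fin 2) (ZMod ℓ) := ↑g

/-- The set of scalar matrices `Z(ℓ)`. -/
def ZSet (ℓ : ℕ) : Set (GL2 ℓ) :=
  { g | ∃ x : ZMod ℓ, mat g = x • (1 : Matrix (Fin 2) (Fin 2) (ZMod ℓ)) }

/-- The split Cartan `C_s(ℓ)`: invertible diagonal matrices. -/
def CsSet (ℓ : ℕ) : Set (GL2 ℓ) := { g | mat g 0 1 = 0 ∧ mat g 1 0 = 0 }

/-- The normalizer `N_s(ℓ)` of the split Cartan: diagonal and antidiagonal matrices. -/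
def NsSet (ℓ : ℕ) : Set (GL2 ℓ) :=
  CsSet ℓ ∪ { g | mat g 0 0 = 0 ∧ mat g 1 1 = 0 }

/-- The nonsplit Cartan `C_ns(ℓ)` relative to the nonsquare `ε`. -/
def CnsSet (ℓ : ℕ) (ε : ZMod ℓ) : Set (GL2 ℓ) :=
  { g | ∃ x y : ZMod ℓ, mat g = !![x, ε * y; y, x] }

/-- The normalizer `N_ns(ℓ)` of the nonsplit Cartan. -/
def NnsSet (ℓ : ℕ) (ε : ZMod ℓ) : Set (GL2 ℓ) :=
  CnsSet ℓ ε ∪ { g | ∃ x y : ZMod ℓ, mat g = !![x, -(ε * y); y, -x] }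

/-- The ramified Cartan `C_r(ℓ)`. -/
def CrSet (ℓ : ℕ) : Set (GL2 ℓ) :=
  { g | mat g 1 0 = 0 ∧ mat g 0 0 = mat g 1 1 }

/-- The Borel subgroup `B(ℓ)`: upper triangular matrices. -/
def BorelSet (ℓ : ℕ) : Set (GL2 ℓ) := { g | mat g 1 0 = 0 }

/-- `G` is conjugate in `GL₂(ℤ/ℓℤ)` to a subgroup of the set `M`. -/
def ConjSub {ℓ : ℕ} (G : Subgroup (GL2 ℓ)) (M : Set (GL2 ℓ)) : Prop :=
  ∃ a : GL2 ℓ, ∀ g ∈ G, a * g * a⁻¹ ∈ M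

/-- `G` belongs to `Z(ℓ)`. -/
def BelongsZ {ℓ : ℕ} (G : Subgroup (GL2 ℓ)) : Prop := ConjSub G (ZSet ℓ)

/-- `G` belongs to `C_s(ℓ)`. -/
def BelongsCs {ℓ : ℕ} (G : Subgroup (GL2 ℓ)) : Prop :=
  ConjSub G (CsSet ℓ) ∧ ¬ ConjSub G (ZSet ℓ)

/-- `G` belongs to `C_ns(ℓ)`. -/
def BelongsCns {ℓ : ℕ} (ε : ZMod ℓ) (G : Subgroup (GL2 ℓ)) : Prop :=
  ConjSub G (CnsSet ℓ ε) ∧ ¬ ConjSub G (ZSet ℓ)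

/-- `G` belongs to `N_s(ℓ)`. -/
def BelongsNs {ℓ : ℕ} (G : Subgroup (GL2 ℓ)) : Prop :=
  ConjSub G (NsSet ℓ) ∧ ¬ ConjSub G (CsSet ℓ)

/-- `G` belongs to `N_ns(ℓ)`. -/
def BelongsNns {ℓ : ℕ} (ε : ZMod ℓ) (G : Subgroup (GL2 ℓ)) : Prop :=
  ConjSub G (NnsSet ℓ ε) ∧ ¬ ConjSub G (CnsSet ℓ ε)

/-- `G` belongs to the ramified Cartan `C_r(ℓ)`. -/
def BelongsCr {ℓ : ℕ} (G : Subgroup (GL2 ℓ)) : Prop :=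
  ConjSub G (CrSet ℓ) ∧ ¬ ConjSub G (ZSet ℓ)

/-- `H` is a twist of `G`: either `H = ⟨G, -I⟩`, or `H` is an index-2 subgroup of
`⟨G, -I⟩` not containing `-I`. -/
def TwistOf {ℓ : ℕ} (G H : Subgroup (GL2 ℓ)) : Prop :=
  H = G ⊔ Subgroup.closure {(-1 : GL2 ℓ)} ∨
    (H ≤ G ⊔ Subgroup.closure {(-1 : GL2 ℓ)} ∧
      H.relIndex (G ⊔ Subgroup.closure {(-1 : GL2 ℓ)}) = 2 ∧
      (-1 : GL2 ℓ) ∉ H)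

/-- `H` fixes a nonzero vector of `(ℤ/ℓℤ)²`. -/
def FixesVec {ℓ : ℕ} (H : Subgroup (GL2 ℓ)) : Prop :=
  ∃ v : Fin 2 → ZMod ℓ, v ≠ 0 ∧ ∀ h ∈ H, Matrix.mulVec (mat h) v = v

end Paper

/-!
The nonsplit Cartan `C_ns(ℓ)` is the image of `𝔽_ℓ(√ε)ˣ` under the regular representation, so it
is cyclic of order `ℓ² - 1` and its unique subgroup of order `ℓ - 1` consists of the scalars. Hence
the subgroups belonging to `C_ns(ℓ)` are, up to conjugacy, the subgroups of `C_ns(ℓ)` whose order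
`d` divides `ℓ² - 1` but not `ℓ - 1`, with index `ℓ (ℓ - 1) (ℓ² - 1) / d`. Writing `d = 2ᵏ m` with
`m` odd, such a `d` fails to divide `ℓ - 1` exactly when it is divisible by an odd prime factor of
`ℓ + 1` or by `2 ^ (ν₂(ℓ - 1) + 1)`.
-/

theorem Subgroup.mem_of_pow_card_eq_one {G : Type*} [CommGroup G] [Finite G] [IsCyclic G]
    (H : Subgroup G) {x : G} (hx : x ^ Nat.card H = 1) : x ∈ H := by
  have hle : H ≤ (powMonoidHom (Nat.card H) : G →* G).ker := fun _ hh =>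
    orderOf_dvd_iff_pow_eq_one.1 (H.orderOf_dvd_natCard hh)
  have heq := Subgroup.eq_of_le_of_card_ge hle (by
    rw [IsCyclic.card_powMonoidHom_ker, Nat.gcd_eq_right (Subgroup.card_subgroup_dvd_card H)])
  exact heq ▸ hx

theorem IsCyclic.exists_subgroup_card_eq {G : Type*} [Group G] [Finite G] [IsCyclic G] {d : ℕ}
    (hd : d ∣ Nat.card G) : ∃ H : Subgroup G, Nat.card H = d := by
  obtain ⟨g, hg⟩ := IsCyclic.exists_generator (α := G)
  refine ⟨Subgroup.zpowers (g ^ (Nat.card G / d)), ?_⟩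
  rw [Nat.card_zpowers, orderOf_pow, orderOf_eq_card_of_forall_mem_zpowers hg,
    Nat.gcd_eq_right (Nat.div_dvd_of_dvd hd), Nat.div_div_self hd Nat.card_pos.ne']

theorem Subgroup.exists_index_eq_iff_exists_card_eq {G : Type*} [Group G] [Finite G]
    (P : Subgroup G → Prop) (n : ℕ) :
    (∃ H : Subgroup G, P H ∧ H.index = n) ↔
      ∃ d, (∃ H : Subgroup G, P H ∧ Nat.card H = d) ∧ n * d = Nat.card G := by
  constructor
  · rintro ⟨H, hH, rfl⟩
    exact ⟨_, ⟨H, hH, rfl⟩, H.index_mul_card⟩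
  · rintro ⟨_, ⟨H, hH, rfl⟩, hn⟩
    exact ⟨H, hH, mul_right_cancel₀ Nat.card_pos.ne' (H.index_mul_card.trans hn.symm)⟩

namespace QuadraticAlgebra

variable {R : Type*} [CommRing R] (a b : R)

instance [Finite R] : Finite (QuadraticAlgebra R a b) := Finite.of_equiv _ (equivProd a b).symm

theorem leftMulMatrix_basis (z : QuadraticAlgebra R a b) :
    Algebra.leftMulMatrix (basis a b) z = !![z.re, a * z.im; z.im, z.re + b * z.im] := by
  ext i j
  fin_cases i <;> fin_cases j <;> simp [Algebra.leftMulMatrix_eq_repr_mul, basis]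

noncomputable def unitsToGL : (QuadraticAlgebra R a b)ˣ →* GL (Fin 2) R :=
  Units.map (Algebra.leftMulMatrix (basis a b)).toMonoidHom

theorem unitsToGL_injective : Function.Injective (unitsToGL a b) :=
  Units.map_injective (Algebra.leftMulMatrix_injective (basis a b))

theorem val_unitsToGL (u : (QuadraticAlgebra R a b)ˣ) :
    (unitsToGL a b u : Matrix (Fin 2) (Fin 2) R) =
      !![(u : QuadraticAlgebra R a b).re, a * (u : QuadraticAlgebra R a b).im;
        (u : QuadraticAlgebra R a b).im,
        (u : QuadraticAlgebra R a b).re + b * (u : QuadraticAlgebra R a b).im] :=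
  leftMulMatrix_basis a b u

theorem val_unitsToGL_map_algebraMap (r : Rˣ) :
    (unitsToGL a b (Units.map (algebraMap R _).toMonoidHom r) : Matrix (Fin 2) (Fin 2) R) =
      (r : R) • 1 := by
  simp [unitsToGL, Algebra.algebraMap_eq_smul_one]

end QuadraticAlgebra

theorem Nat.sq_sub_one_eq_mul (ℓ : ℕ) : ℓ ^ 2 - 1 = (ℓ + 1) * (ℓ - 1) := by
  simpa using Nat.sq_sub_sq ℓ 1

theorem exists_dvd_mul_eq_mul_iff {c N Q n : ℕ} (hc : 0 < c) (hQ : Q ∣ N) (hN : 0 < N) :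
    (∃ d, d ∣ N ∧ Q ∣ d ∧ n * d = c * N) ↔ c ∣ n ∧ n ∣ c * N / Q := by
  obtain ⟨t, rfl⟩ := hQ
  have hQ0 : Q ≠ 0 := by rintro rfl; simp at hN
  rw [mul_left_comm, Nat.mul_div_cancel_left _ (Nat.pos_of_ne_zero hQ0)]
  constructor
  · rintro ⟨_, ⟨e, he⟩, ⟨k, rfl⟩, hn⟩
    obtain rfl : t = k * e := by
      rw [mul_assoc] at he
      exact mul_left_cancel₀ hQ0 he
    have hk : Q * k ≠ 0 := left_ne_zero_of_mul (by rw [← mul_assoc] at hN; exact hN.ne')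
    obtain rfl : n = c * e := mul_right_cancel₀ hk (by rw [hn]; ring)
    exact ⟨dvd_mul_right c e, k, by ring⟩
  · rintro ⟨⟨e, rfl⟩, k, hk⟩
    obtain rfl : t = e * k := mul_left_cancel₀ hc.ne' (by rw [hk]; ring)
    exact ⟨Q * k, ⟨e, by ring⟩, dvd_mul_right Q k, by ring⟩

section

variable {ℓ : ℕ}

theorem not_dvd_sub_one_of_dvd_add_one {q : ℕ} (hq : q.Prime) (hq_odd : Odd q)
    (hq_dvd : q ∣ ℓ + 1) : ¬ q ∣ ℓ - 1 := by
  intro hq_dvd'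
  have hq_le := Nat.le_of_dvd (by omega) (Nat.dvd_sub hq_dvd hq_dvd')
  obtain ⟨r, rfl⟩ := hq_odd
  have := hq.two_le
  omega

theorem two_pow_padicValNat_succ_dvd_sq_sub_one (hodd : Odd ℓ) :
    2 ^ (padicValNat 2 (ℓ - 1) + 1) ∣ ℓ ^ 2 - 1 := by
  rw [Nat.sq_sub_one_eq_mul, pow_succ, mul_comm (ℓ + 1)]
  exact mul_dvd_mul pow_padicValNat_dvd (even_iff_two_dvd.1 hodd.add_one)

theorem dvd_sub_one_of_dvd_sq_sub_one (hℓ : 1 < ℓ) {d : ℕ} (hd : d ∣ ℓ ^ 2 - 1)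
    (hodd : ∀ q, q.Prime → Odd q → q ∣ ℓ + 1 → ¬ q ∣ d)
    (htwo : ¬ 2 ^ (padicValNat 2 (ℓ - 1) + 1) ∣ d) : d ∣ ℓ - 1 := by
  have hd0 : d ≠ 0 := by
    rintro rfl
    have := Nat.eq_zero_of_zero_dvd hd
    have := Nat.one_lt_pow two_ne_zero hℓ
    omega
  obtain ⟨k, m, hm_odd, rfl⟩ := Nat.exists_eq_two_pow_mul_odd hd0
  have hk : 2 ^ k ∣ ℓ - 1 := by
    refine (Nat.pow_dvd_pow 2 ?_).trans pow_padicValNat_dvd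
    by_contra! h
    exact htwo ((Nat.pow_dvd_pow 2 h).trans (dvd_mul_right _ _))
  have hm : m ∣ ℓ - 1 := by
    have hcop : m.Coprime (ℓ + 1) := Nat.coprime_of_dvd fun q hq hqm hql =>
      hodd q hq (hm_odd.of_dvd_nat hqm) hql (hqm.trans (dvd_mul_left _ _))
    exact hcop.dvd_of_dvd_mul_left ((dvd_mul_left _ _).trans (Nat.sq_sub_one_eq_mul ℓ ▸ hd))
  exact (Nat.Coprime.pow_left k (Nat.coprime_two_left.2 hm_odd)).mul_dvd_of_dvd_of_dvd hk hm

theorem exists_cofactor_not_dvd_sub_one_iff (hℓ : 1 < ℓ) (hodd : Odd ℓ) (n : ℕ) :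
    (∃ d, (d ∣ ℓ ^ 2 - 1 ∧ ¬ d ∣ ℓ - 1) ∧ n * d = ℓ * (ℓ - 1) * (ℓ ^ 2 - 1)) ↔
      0 < n ∧ ℓ * (ℓ - 1) ∣ n ∧ ∃ m : ℕ,
        ((∃ q : ℕ, q.Prime ∧ Odd q ∧ q ∣ (ℓ + 1) ∧ m = ℓ * (ℓ + 1) * (ℓ - 1) ^ 2 / q) ∨
          m = ℓ * (ℓ + 1) * (ℓ - 1) ^ 2 / 2 ^ (padicValNat 2 (ℓ - 1) + 1)) ∧ n ∣ m := by
  have hM : ℓ * (ℓ + 1) * (ℓ - 1) ^ 2 = ℓ * (ℓ - 1) * (ℓ ^ 2 - 1) := by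
    rw [Nat.sq_sub_one_eq_mul]; ring
  have hc : 0 < ℓ * (ℓ - 1) := Nat.mul_pos (by omega) (by omega)
  have hN : 0 < ℓ ^ 2 - 1 := by
    rw [Nat.sq_sub_one_eq_mul]; exact Nat.mul_pos (by omega) (by omega)
  have hq_dvd {q : ℕ} (hq : q ∣ ℓ + 1) : q ∣ ℓ ^ 2 - 1 :=
    Nat.sq_sub_one_eq_mul ℓ ▸ dvd_mul_of_dvd_left hq _
  have htwo := two_pow_padicValNat_succ_dvd_sq_sub_one hodd
  simp only [hM]
  constructor
  · rintro ⟨d, ⟨hd, hnd⟩, hn⟩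
    have hn0 : 0 < n := Nat.pos_of_ne_zero (left_ne_zero_of_mul (hn ▸ (Nat.mul_pos hc hN).ne'))
    have key : (∃ q, q.Prime ∧ Odd q ∧ q ∣ ℓ + 1 ∧ q ∣ d) ∨
        2 ^ (padicValNat 2 (ℓ - 1) + 1) ∣ d := by
      by_contra! h
      exact hnd (dvd_sub_one_of_dvd_sq_sub_one hℓ hd h.1 h.2)
    rcases key with ⟨q, hq, hqo, hql, hqd⟩ | h2d
    · obtain ⟨hcn, hnm⟩ := (exists_dvd_mul_eq_mul_iff hc (hq_dvd hql) hN).1 ⟨d, hd, hqd, hn⟩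
      exact ⟨hn0, hcn, _, Or.inl ⟨q, hq, hqo, hql, rfl⟩, hnm⟩
    · obtain ⟨hcn, hnm⟩ := (exists_dvd_mul_eq_mul_iff hc htwo hN).1 ⟨d, hd, h2d, hn⟩
      exact ⟨hn0, hcn, _, Or.inr rfl, hnm⟩
  · rintro ⟨-, hcn, m, hm, hnm⟩
    rcases hm with ⟨q, hq, hqo, hql, rfl⟩ | rfl
    · obtain ⟨d, hd, hqd, hn⟩ := (exists_dvd_mul_eq_mul_iff hc (hq_dvd hql) hN).2 ⟨hcn, hnm⟩
      exact ⟨d, ⟨hd, fun h => not_dvd_sub_one_of_dvd_add_one hq hqo hql (hqd.trans h)⟩, hn⟩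
    · obtain ⟨d, hd, h2d, hn⟩ := (exists_dvd_mul_eq_mul_iff hc htwo hN).2 ⟨hcn, hnm⟩
      have : Fact (Nat.Prime 2) := ⟨Nat.prime_two⟩
      exact ⟨d, ⟨hd, fun h => pow_succ_padicValNat_not_dvd (by omega) (h2d.trans h)⟩, hn⟩

end

namespace Paper

open QuadraticAlgebra

variable {ℓ : ℕ}

theorem conjSub_map_conj_iff (G : Subgroup (GL2 ℓ)) (M : Set (GL2 ℓ)) (a : GL2 ℓ) :
    ConjSub (G.map (MulAut.conj a).toMonoidHom) M ↔ ConjSub G M := by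
  constructor
  · rintro ⟨b, hb⟩
    exact ⟨b * a, fun g hg => by simpa [mul_assoc] using hb _ ⟨g, hg, rfl⟩⟩
  · rintro ⟨b, hb⟩
    refine ⟨b * a⁻¹, ?_⟩
    rintro _ ⟨g, hg, rfl⟩
    simpa [mul_assoc] using hb g hg

theorem conjSub_iff_exists_map_le (G H : Subgroup (GL2 ℓ)) :
    ConjSub G H ↔ ∃ a : GL2 ℓ, G.map (MulAut.conj a).toMonoidHom ≤ H := by
  refine exists_congr fun a => ⟨?_, fun h g hg => h ⟨g, hg, rfl⟩⟩
  rintro h _ ⟨g, hg, rfl⟩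
  exact h g hg

variable [Fact ℓ.Prime]

theorem card_GL2 : Nat.card (GL2 ℓ) = ℓ * (ℓ - 1) * (ℓ ^ 2 - 1) := by
  rw [Matrix.card_GL_field, Fin.prod_univ_two, ZMod.card]
  simp only [Fin.val_zero, Fin.val_one, pow_zero, pow_one]
  rw [sq ℓ, ← Nat.mul_sub_one]
  ring

theorem pow_sub_one_eq_one_of_mem_ZSet {g : GL2 ℓ} (hg : g ∈ ZSet ℓ) : g ^ (ℓ - 1) = 1 := by
  obtain ⟨x, hx⟩ := hg
  have hx0 : x ≠ 0 := by
    rintro rfl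
    exact g.ne_zero (by rw [← mat, hx, zero_smul])
  ext1
  rw [Units.val_pow_eq_pow_val, ← mat, hx, smul_pow, one_pow,
    ZMod.pow_card_sub_one_eq_one hx0, one_smul, Units.val_one]

variable (ε : ZMod ℓ)

noncomputable def nonsplitCartan : Subgroup (GL2 ℓ) := (unitsToGL ε (0 : ZMod ℓ)).range

-- the hypothesis under which `QuadraticAlgebra (ZMod ℓ) ε 0` is a field
variable {ε} [Fact (∀ r : ZMod ℓ, r ^ 2 ≠ ε + 0 * r)]

theorem coe_nonsplitCartan : (nonsplitCartan ε : Set (GL2 ℓ)) = CnsSet ℓ ε := by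
  ext g
  constructor
  · rintro ⟨u, rfl⟩
    exact ⟨(u : QuadraticAlgebra (ZMod ℓ) ε 0).re, (u : QuadraticAlgebra (ZMod ℓ) ε 0).im,
      by rw [mat, val_unitsToGL, zero_mul, add_zero]⟩
  · rintro ⟨x, y, h⟩
    have hz : (⟨x, y⟩ : QuadraticAlgebra (ZMod ℓ) ε 0) ≠ 0 := by
      intro hz
      obtain ⟨rfl, rfl⟩ : x = 0 ∧ y = 0 := ⟨congrArg re hz, congrArg im hz⟩
      refine g.ne_zero ?_
      rw [← mat, h]
      ext i j
      fin_cases i <;> fin_cases j <;> simp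
    refine ⟨Units.mk0 _ hz, Units.ext ?_⟩
    rw [val_unitsToGL, ← mat, h]
    simp

theorem card_nonsplitCartan : Nat.card (nonsplitCartan ε) = ℓ ^ 2 - 1 := by
  rw [nonsplitCartan, ← Nat.card_congr (MonoidHom.ofInjective (unitsToGL_injective ε 0)).toEquiv,
    Nat.card_units, Nat.card_congr (equivProd ε 0), Nat.card_prod, Nat.card_zmod, sq]

instance : IsCyclic (nonsplitCartan ε) :=
  isCyclic_of_surjective _ (unitsToGL ε (0 : ZMod ℓ)).rangeRestrict_surjective

theorem mem_ZSet_of_mem_nonsplitCartan {g : GL2 ℓ} (hg : g ∈ nonsplitCartan ε)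
    (h : g ^ (ℓ - 1) = 1) : g ∈ ZSet ℓ := by
  obtain ⟨u, rfl⟩ := hg
  let scalars :=
    (Units.map (algebraMap (ZMod ℓ) (QuadraticAlgebra (ZMod ℓ) ε 0)).toMonoidHom).range
  have hcard : Nat.card scalars = ℓ - 1 := by
    rw [← Nat.card_congr (MonoidHom.ofInjective (Units.map_injective
      (algebraMap_injective (a := ε) (b := 0)))).toEquiv, Nat.card_eq_fintype_card,
      ZMod.card_units]
  have hu : u ^ Nat.card scalars = 1 := by
    rw [hcard]
    exact unitsToGL_injective ε 0 (by rw [map_pow, h, map_one])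
  obtain ⟨r, rfl⟩ := scalars.mem_of_pow_card_eq_one hu
  exact ⟨r, val_unitsToGL_map_algebraMap ε 0 r⟩

theorem conjSub_ZSet_iff_card_dvd {G : Subgroup (GL2 ℓ)} (hG : G ≤ nonsplitCartan ε) :
    ConjSub G (ZSet ℓ) ↔ Nat.card G ∣ ℓ - 1 := by
  constructor
  · rintro ⟨a, ha⟩
    have : IsCyclic G := Subgroup.isCyclic_of_le hG
    rw [← IsCyclic.exponent_eq_card]
    refine Monoid.exponent_dvd_of_forall_pow_eq_one fun g => Subtype.ext ?_
    have h := pow_sub_one_eq_one_of_mem_ZSet (ha g g.2)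
    rw [conj_pow, mul_inv_eq_one, mul_eq_left] at h
    rw [Subgroup.coe_pow, h, Subgroup.coe_one]
  · intro hdvd
    refine ⟨1, fun g hg => ?_⟩
    rw [one_mul, inv_one, mul_one]
    refine mem_ZSet_of_mem_nonsplitCartan (hG hg) ?_
    exact orderOf_dvd_iff_pow_eq_one.1 ((G.orderOf_dvd_natCard hg).trans hdvd)

theorem exists_belongsCns_card_eq_iff (d : ℕ) :
    (∃ G : Subgroup (GL2 ℓ), BelongsCns ε G ∧ Nat.card G = d) ↔
      d ∣ ℓ ^ 2 - 1 ∧ ¬ d ∣ ℓ - 1 := by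
  constructor
  · rintro ⟨G, ⟨hC, hZ⟩, rfl⟩
    rw [← coe_nonsplitCartan, conjSub_iff_exists_map_le] at hC
    obtain ⟨a, hle⟩ := hC
    have hcard : Nat.card (G.map (MulAut.conj a).toMonoidHom) = Nat.card G :=
      Subgroup.card_map_of_injective (MulAut.conj a).injective
    rw [← conjSub_map_conj_iff G _ a, conjSub_ZSet_iff_card_dvd hle, hcard] at hZ
    refine ⟨?_, hZ⟩
    rw [← card_nonsplitCartan (ε := ε), ← hcard]
    exact Subgroup.card_dvd_of_le hle
  · rintro ⟨hd, hnd⟩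
    rw [← card_nonsplitCartan (ε := ε)] at hd
    obtain ⟨H, rfl⟩ := IsCyclic.exists_subgroup_card_eq hd
    have hle : H.map (nonsplitCartan ε).subtype ≤ nonsplitCartan ε := Subgroup.map_subtype_le H
    have hcard := Subgroup.card_subtype _ H
    refine ⟨_, ⟨⟨1, fun g hg => ?_⟩, ?_⟩, hcard⟩
    · simpa [← coe_nonsplitCartan] using hle hg
    · rwa [conjSub_ZSet_iff_card_dvd hle, hcard]

end Paper

theorem statement_4 (ℓ : ℕ) (hℓ : Nat.Prime ℓ) (hodd : Odd ℓ) (ε : ZMod ℓ)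
    (hε : ∀ t : ZMod ℓ, t ^ 2 ≠ ε) :
    { n : ℕ | ∃ G : Subgroup (GL2 ℓ), Paper.BelongsCns ε G ∧ G.index = n } =
      { n : ℕ | 0 < n ∧ ℓ * (ℓ - 1) ∣ n ∧
        ∃ m : ℕ,
          ((∃ q : ℕ, q.Prime ∧ Odd q ∧ q ∣ (ℓ + 1) ∧ m = ℓ * (ℓ + 1) * (ℓ - 1) ^ 2 / q) ∨
            m = ℓ * (ℓ + 1) * (ℓ - 1) ^ 2 / 2 ^ (padicValNat 2 (ℓ - 1) + 1)) ∧ n ∣ m } := by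
  have : Fact ℓ.Prime := ⟨hℓ⟩
  have : Fact (∀ r : ZMod ℓ, r ^ 2 ≠ ε + 0 * r) := ⟨by simpa using hε⟩
  ext n
  rw [Set.mem_ofPred_eq, Set.mem_ofPred_eq, Subgroup.exists_index_eq_iff_exists_card_eq,
    Paper.card_GL2]
  simp only [Paper.exists_belongsCns_card_eq_iff]
  exact exists_cofactor_not_dvd_sub_one_iff hℓ.one_lt hodd n
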